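/- Let G be a simple graph, Y an induced subgraph, and suppose a group Γ acts on G by automorphisms with a symmetric generating set S. If there exists k ≥ 1 such that s·V(Y) ⊆ V(Y^k) for every s ∈ S, then for every γ ∈ Γ and every vertex v ∈ V(Y), γ·v ∈ V(Y^ω). Consequently the orbit Γ·V(Y) is contained in V(Y^ω). -/

import Mathlib

/-!
Graph isomorphisms transport unique common neighbours, so an automorphism `g` with
`g '' Y ⊆ Y^n` maps `Y^m` into `(Y^n)^m = Y^(n+m)`. Hence the elements `γ` with
`γ '' Y ⊆ Y^n` for some `n` form a submonoid; as `S` is symmetric, the submonoid generated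
by `S` is all of `Γ`.
-/

def UniqDet {V : Type*} (G : SimpleGraph V) (A : Set V) (v : V) : Prop :=
  (∀ a ∈ A, G.Adj a v) ∧ ∀ w, (∀ a ∈ A, G.Adj a w) → w = v

def rigidExpand {V : Type*} (G : SimpleGraph V) (Y : Set V) : Set V :=
  Y ∪ {v | ∃ A ⊆ Y, UniqDet G A v}

def rigidIter {V : Type*} (G : SimpleGraph V) (Y : Set V) : ℕ → Set V
  | 0 => Y
  | n + 1 => rigidExpand G (rigidIter G Y n)

def rigidOmega {V : Type*} (G : SimpleGraph V) (Y : Set V) : Set V :=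
  ⋃ n, rigidIter G Y n

def MaxClique {V : Type*} (G : SimpleGraph V) (s : Set V) : Prop :=
  G.IsClique s ∧ ∀ t, G.IsClique t → s ⊆ t → s = t

section

variable {V W : Type*} {G : SimpleGraph V} {H : SimpleGraph W}

lemma UniqDet.map (e : G ≃g H) {A : Set V} {v : V} (h : UniqDet G A v) :
    UniqDet H (e '' A) (e v) := by
  refine ⟨?_, fun w hw => ?_⟩
  · rintro _ ⟨a, ha, rfl⟩
    exact e.map_adj_iff.2 (h.1 a ha)
  · have hv : e.symm w = v :=
      h.2 _ fun a ha => by simpa using e.symm.map_adj_iff.2 (hw (e a) ⟨a, ha, rfl⟩)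
    rw [← hv, e.apply_symm_apply]

lemma rigidExpand_mono {Y Z : Set V} (h : Y ⊆ Z) : rigidExpand G Y ⊆ rigidExpand G Z := by
  rintro v (hv | ⟨A, hA, hdet⟩)
  · exact Or.inl (h hv)
  · exact Or.inr ⟨A, hA.trans h, hdet⟩

lemma image_rigidExpand_subset (e : G ≃g H) (Y : Set V) :
    e '' rigidExpand G Y ⊆ rigidExpand H (e '' Y) := by
  rintro _ ⟨v, hv | ⟨A, hA, hdet⟩, rfl⟩
  · exact Or.inl ⟨v, hv, rfl⟩
  · exact Or.inr ⟨e '' A, Set.image_mono hA, hdet.map e⟩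

lemma rigidIter_mono {Y Z : Set V} (h : Y ⊆ Z) (m : ℕ) :
    rigidIter G Y m ⊆ rigidIter G Z m := by
  induction m with
  | zero => exact h
  | succ m ih => exact rigidExpand_mono ih

lemma image_rigidIter_subset (e : G ≃g H) (Y : Set V) (m : ℕ) :
    e '' rigidIter G Y m ⊆ rigidIter H (e '' Y) m := by
  induction m with
  | zero => exact subset_rfl
  | succ m ih => exact (image_rigidExpand_subset e _).trans (rigidExpand_mono ih)

lemma rigidIter_rigidIter (Y : Set V) (n m : ℕ) :
    rigidIter G (rigidIter G Y n) m = rigidIter G Y (n + m) := by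
  induction m with
  | zero => rfl
  | succ m ih => exact congrArg (rigidExpand G) ih

lemma image_rigidIter_subset_rigidIter_add (e : G ≃g G) {Y : Set V} {n : ℕ}
    (he : e '' Y ⊆ rigidIter G Y n) (m : ℕ) :
    e '' rigidIter G Y m ⊆ rigidIter G Y (n + m) :=
  rigidIter_rigidIter (G := G) Y n m ▸
    (image_rigidIter_subset e Y m).trans (rigidIter_mono he m)

lemma exists_image_subset_rigidIter_of_mem_closure {M : Type*} [Monoid M] {Y : Set V}
    (ρ : M →* Equiv.Perm V) (hadj : ∀ (γ : M) (u v : V), G.Adj u v ↔ G.Adj (ρ γ u) (ρ γ v))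
    {S : Set M} (hS : ∀ s ∈ S, ∃ n, ⇑(ρ s) '' Y ⊆ rigidIter G Y n)
    {γ : M} (hγ : γ ∈ Submonoid.closure S) : ∃ n, ⇑(ρ γ) '' Y ⊆ rigidIter G Y n := by
  induction hγ using Submonoid.closure_induction with
  | mem s hs => exact hS s hs
  | one => exact ⟨0, by simp [rigidIter]⟩
  | mul x y _ _ hx hy =>
    obtain ⟨n, hn⟩ := hx
    obtain ⟨m, hm⟩ := hy
    let ex : G ≃g G := ⟨ρ x, (hadj x _ _).symm⟩
    refine ⟨n + m, ?_⟩
    rw [map_mul, Equiv.Perm.coe_mul, Set.image_comp]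
    exact (Set.image_mono hm).trans (image_rigidIter_subset_rigidIter_add ex hn m)

end

theorem orbit_subset_omega_general {V Γ : Type*} [Group Γ] (G : SimpleGraph V) (Y : Set V)
    (ρ : Γ →* Equiv.Perm V)
    (hadj : ∀ (γ : Γ) (u v : V), G.Adj u v ↔ G.Adj (ρ γ u) (ρ γ v))
    (S : Set Γ) (hsym : S⁻¹ = S) (hgen : Subgroup.closure S = ⊤)
    (k : ℕ) (hS : ∀ s ∈ S, ⇑(ρ s) '' Y ⊆ rigidIter G Y k) :
    ∀ (γ : Γ), ∀ v ∈ Y, ρ γ v ∈ rigidOmega G Y := by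
  intro γ v hv
  have hγ : γ ∈ Submonoid.closure S := by
    rw [← Set.union_self S, ← congrArg (S ∪ ·) hsym, ← Subgroup.closure_toSubmonoid, hgen]
    trivial
  obtain ⟨n, hn⟩ :=
    exists_image_subset_rigidIter_of_mem_closure ρ hadj (fun s hs => ⟨k, hS s hs⟩) hγ
  exact Set.mem_iUnion.2 ⟨n, hn ⟨v, hv, rfl⟩⟩

theorem orbit_subset_omega {V Γ : Type*} [Group Γ] (G : SimpleGraph V) (Y : Set V)
    (ρ : Γ →* Equiv.Perm V)
    (hadj : ∀ (γ : Γ) (u v : V), G.Adj u v ↔ G.Adj (ρ γ u) (ρ γ v))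
    (S : Set Γ) (hsym : S⁻¹ = S) (hgen : Subgroup.closure S = ⊤)
    (k : ℕ) (hk : 1 ≤ k) (hS : ∀ s ∈ S, ⇑(ρ s) '' Y ⊆ rigidIter G Y k) :
    ∀ (γ : Γ), ∀ v ∈ Y, ρ γ v ∈ rigidOmega G Y :=
  orbit_subset_omega_general G Y ρ hadj S hsym hgen k hS
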